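/- For every graph G, the largest eigenvalue q(G) of the signless Laplacian Q(G) satisfies q(G) ≤ max over vertices u of [ d(u) + (1/d(u)) · Σ_{v ∈ Γ(u)} d(v) ], where the maximum is over vertices u of positive degree (assuming G has at least one edge). -/

import Mathlib

open scoped Classical

/-- The signless Laplacian matrix `Q(G) = D(G) + A(G)` of a finite simple graph. -/
noncomputable def signlessLaplacian {V : Type*} [Fintype V] (G : SimpleGraph V) :
    Matrix V V ℝ :=
  Matrix.diagonal (fun v => (G.degree v : ℝ)) + G.adjMatrix ℝ

/-- The `Q`-index of `G`: the largest eigenvalue of the signless Laplacian. -/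
noncomputable def qIndex {V : Type*} [Fintype V] (G : SimpleGraph V) : ℝ :=
  sSup (spectrum ℝ (signlessLaplacian G))

/-- `G` contains a copy of `F` (a subgraph isomorphic to `F`). -/
def HasCopy {α β : Type*} (F : SimpleGraph α) (G : SimpleGraph β) : Prop :=
  ∃ f : F →g G, Function.Injective f

/-- The graph `S_{n,k}^+`: a `k`-clique joined to an independent set of `n - k`
vertices, with one extra edge added inside the independent set
(between vertices `k` and `k+1`). -/
def SnkPlus (n k : ℕ) : SimpleGraph (Fin n) where
  Adj i j := i ≠ j ∧ ((i : ℕ) < k ∨ (j : ℕ) < k ∨ ((i : ℕ) < k + 2 ∧ (j : ℕ) < k + 2))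
  symm := ⟨by intro i j h; exact ⟨h.1.symm, by tauto⟩⟩
  loopless := ⟨by intro i h; exact h.1 rfl⟩

/-- `L_{t,k} = K_1 ∨ (t · K_k)`: `t` copies of `K_{k+1}` sharing one common vertex
(vertex `0`, the center). -/
def Lgraph (t k : ℕ) : SimpleGraph (Fin (t * k + 1)) where
  Adj i j := i ≠ j ∧ ((i : ℕ) = 0 ∨ (j : ℕ) = 0 ∨ ((i : ℕ) - 1) / k = ((j : ℕ) - 1) / k)
  symm := ⟨by intro i j h; exact ⟨h.1.symm, by tauto⟩⟩
  loopless := ⟨by intro i h; exact h.1 rfl⟩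

/-- Disjoint union of `t` copies of `K_{k+1}`. -/
def disjointCliques (t k : ℕ) : SimpleGraph (Fin t × Fin (k + 1)) where
  Adj i j := i ≠ j ∧ i.1 = j.1
  symm := ⟨by intro i j h; exact ⟨h.1.symm, h.2.symm⟩⟩
  loopless := ⟨by intro i h; exact h.1 rfl⟩

/-- `K_1 ∨ ((t-1)·K_k ∪ K_{k+1})` on `t*k + 2` vertices: vertex `0` is the center,
the last block has `k+1` vertices. -/
def Mgraph (t k : ℕ) : SimpleGraph (Fin (t * k + 2)) where
  Adj i j := i ≠ j ∧ ((i : ℕ) = 0 ∨ (j : ℕ) = 0 ∨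
    min (((i : ℕ) - 1) / k) (t - 1) = min (((j : ℕ) - 1) / k) (t - 1))
  symm := ⟨by intro i j h; exact ⟨h.1.symm, by tauto⟩⟩
  loopless := ⟨by intro i h; exact h.1 rfl⟩

/-- Two disjoint graphs `L_{s,k}` and `L_{t,k}` with their centers joined by an edge. -/
def DLgraph (s t k : ℕ) : SimpleGraph (Fin (s * k + 1) ⊕ Fin (t * k + 1)) where
  Adj x y :=
    match x, y with
    | .inl a, .inl b => (Lgraph s k).Adj a b
    | .inr a, .inr b => (Lgraph t k).Adj a b
    | .inl a, .inr b => (a : ℕ) = 0 ∧ (b : ℕ) = 0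
    | .inr a, .inl b => (a : ℕ) = 0 ∧ (b : ℕ) = 0
  symm := ⟨by
    intro x y h
    cases x <;> cases y <;> simp_all <;>
      first
        | exact ((Lgraph _ _).adj_symm h)⟩
  loopless := ⟨by
    intro x h
    cases x
    · exact (Lgraph s k).ne_of_adj h rfl
    · exact (Lgraph t k).ne_of_adj h rfl⟩

/-- Number of edges of `G` lying inside the vertex set `X`. -/
noncomputable def edgesWithin {V : Type*} [Fintype V] (G : SimpleGraph V) (X : Finset V) : ℕ :=
  (G.induce (X : Set V)).edgeFinset.card

/-- Number of edges of `G` joining the disjoint vertex sets `X` and `Y`. -/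
noncomputable def edgesBetween {V : Type*} [Fintype V] (G : SimpleGraph V)
    (X Y : Finset V) : ℕ :=
  ((X ×ˢ Y).filter fun p => G.Adj p.1 p.2).card
set_option maxHeartbeats 2000000 in
/-- **Merris' bound.** For a graph with at least one edge,
`q(G) ≤ max_u [ d(u) + (1/d(u)) ∑_{v ∈ Γ(u)} d(v) ]`, the maximum being over
vertices of positive degree. -/
theorem merris_bound {V : Type*} [Fintype V] (G : SimpleGraph V)
    (h : G.edgeSet.Nonempty) :
    ∃ u : V, 0 < G.degree u ∧
      qIndex G ≤ (G.degree u : ℝ) +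
        (1 / (G.degree u : ℝ)) * ∑ v ∈ G.neighborFinset u, (G.degree v : ℝ) := by
  classical
  -- a vertex of positive degree exists
  have hex : ∃ a : V, 0 < G.degree a := by
    obtain ⟨e, he⟩ := h
    induction e using Sym2.ind with
    | _ a b =>
      exact ⟨a, (G.degree_pos_iff_exists_adj a).2 ⟨b, G.mem_edgeSet.mp he⟩⟩
  obtain ⟨a, ha⟩ := hex
  set S : Finset V := Finset.univ.filter (fun v => 0 < G.degree v) with hSdef
  have haS : a ∈ S := by simp [hSdef, ha]
  set B : V → ℝ := fun u => (G.degree u : ℝ) +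
      (1 / (G.degree u : ℝ)) * ∑ v ∈ G.neighborFinset u, (G.degree v : ℝ) with hBdef
  obtain ⟨u, huS, humax⟩ := Finset.exists_max_image S B ⟨a, haS⟩
  have hud : 0 < G.degree u := by simpa [hSdef] using huS
  have hBu0 : 0 ≤ B u :=
    add_nonneg (Nat.cast_nonneg _) (mul_nonneg
      (one_div_nonneg.mpr (Nat.cast_nonneg _))
      (Finset.sum_nonneg fun v _ => Nat.cast_nonneg _))
  refine ⟨u, hud, ?_⟩
  rw [qIndex]
  refine Real.sSup_le ?_ hBu0
  intro lam hlam
  -- extract an eigenvector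
  obtain ⟨x, hx0, hmul⟩ : ∃ x : V → ℝ, x ≠ 0 ∧
      (signlessLaplacian G).mulVec x = lam • x := by
    rw [← AlgEquiv.spectrum_eq (Matrix.toLinAlgEquiv <| Pi.basisFun ℝ V),
      ← Module.End.hasEigenvalue_iff_mem_spectrum] at hlam
    obtain ⟨x, hx⟩ := hlam.exists_hasEigenvector
    refine ⟨x, hx.right, ?_⟩
    have h2 := hx.apply_eq_smul
    rw [Matrix.toLinAlgEquiv_apply] at h2
    funext w
    have := congrFun h2 w
    have hr : ⇑((Pi.basisFun ℝ V).repr x) = x := funext (fun i => Pi.basisFun_repr (R := ℝ) (η := V) x i)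
    simpa [Pi.basisFun_apply, Finset.sum_apply, Pi.single_apply, hr] using this
  have key : ∀ w : V, (G.degree w : ℝ) * x w + ∑ v ∈ G.neighborFinset w, x v
      = lam * x w := by
    intro w
    have := congrFun hmul w
    simpa [signlessLaplacian, Matrix.add_mulVec, Matrix.mulVec_diagonal,
      SimpleGraph.adjMatrix_mulVec_apply] using this
  by_cases hcase : ∀ v, 0 < G.degree v → x v = 0
  · -- x supported on isolated vertices; lam = 0
    obtain ⟨w, hw⟩ : ∃ w, x w ≠ 0 := by
      by_contra hc
      push_neg at hc
      exact hx0 (funext hc)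
    have hdw : G.degree w = 0 := by
      by_contra hd
      exact hw (hcase w (Nat.pos_of_ne_zero hd))
    have hnb : G.neighborFinset w = ∅ := Finset.card_eq_zero.mp hdw
    have h1 := key w
    rw [hdw, hnb] at h1
    simp only [Nat.cast_zero, zero_mul, Finset.sum_empty, add_zero] at h1
    rcases mul_eq_zero.mp h1.symm with hl | hl
    · rw [hl]; exact hBu0
    · exact absurd hl hw
  · push_neg at hcase
    obtain ⟨v0, hv0d, hv0x⟩ := hcase
    set y : V → ℝ := fun v => x v / (G.degree v : ℝ) with hydef
    have hv0S : v0 ∈ S := by simp [hSdef, hv0d]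
    obtain ⟨w, hwS, hwmax⟩ := Finset.exists_max_image S (fun v => |y v|) ⟨v0, hv0S⟩
    have hwd : 0 < G.degree w := by simpa [hSdef] using hwS
    have hdpos : (0:ℝ) < (G.degree w : ℝ) := by exact_mod_cast hwd
    have hyw : 0 < |y w| := by
      have hd0 : (0:ℝ) < (G.degree v0 : ℝ) := by exact_mod_cast hv0d
      have : 0 < |y v0| := by
        rw [hydef]
        simp only [abs_div, abs_of_pos hd0]
        exact div_pos (abs_pos.mpr hv0x) hd0
      exact lt_of_lt_of_le this (hwmax v0 hv0S)
    have hxw : x w = (G.degree w : ℝ) * y w := by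
      rw [hydef]; field_simp
    have hxv : ∀ v ∈ G.neighborFinset w, x v = (G.degree v : ℝ) * y v := by
      intro v hv
      have hvd : 0 < G.degree v := by
        rw [SimpleGraph.mem_neighborFinset] at hv
        exact (G.degree_pos_iff_exists_adj v).2 ⟨w, hv.symm⟩
      have : (0:ℝ) < (G.degree v : ℝ) := by exact_mod_cast hvd
      rw [hydef]; field_simp
    have heq : lam * ((G.degree w : ℝ) * y w) =
        (G.degree w : ℝ)^2 * y w +
          ∑ v ∈ G.neighborFinset w, (G.degree v : ℝ) * y v := by
      rw [← hxw, ← key w, hxw, ← Finset.sum_congr rfl hxv]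
      ring
    have hvS : ∀ v ∈ G.neighborFinset w, |y v| ≤ |y w| := by
      intro v hv
      have hvd : 0 < G.degree v := by
        rw [SimpleGraph.mem_neighborFinset] at hv
        exact (G.degree_pos_iff_exists_adj v).2 ⟨w, hv.symm⟩
      exact hwmax v (by simp [hSdef, hvd])
    have habs : |lam| * ((G.degree w : ℝ) * |y w|) ≤
        ((G.degree w : ℝ)^2 + ∑ v ∈ G.neighborFinset w, (G.degree v : ℝ)) * |y w| := by
      calc |lam| * ((G.degree w : ℝ) * |y w|)
          = |lam * ((G.degree w : ℝ) * y w)| := by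
            rw [abs_mul, abs_mul, abs_of_pos hdpos]
        _ = |(G.degree w : ℝ)^2 * y w +
              ∑ v ∈ G.neighborFinset w, (G.degree v : ℝ) * y v| := by rw [heq]
        _ ≤ |(G.degree w : ℝ)^2 * y w| +
              |∑ v ∈ G.neighborFinset w, (G.degree v : ℝ) * y v| := abs_add_le _ _
        _ ≤ (G.degree w : ℝ)^2 * |y w| +
              ∑ v ∈ G.neighborFinset w, |(G.degree v : ℝ) * y v| := by
            refine add_le_add ?_ (Finset.abs_sum_le_sum_abs _ _)
            rw [abs_mul, abs_of_nonneg (sq_nonneg _)]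
        _ ≤ (G.degree w : ℝ)^2 * |y w| +
              ∑ v ∈ G.neighborFinset w, (G.degree v : ℝ) * |y w| := by
            refine add_le_add le_rfl (Finset.sum_le_sum ?_)
            intro v hv
            rw [abs_mul, abs_of_nonneg (Nat.cast_nonneg _)]
            exact mul_le_mul_of_nonneg_left (hvS v hv) (Nat.cast_nonneg _)
        _ = ((G.degree w : ℝ)^2 + ∑ v ∈ G.neighborFinset w, (G.degree v : ℝ)) * |y w| := by
            rw [← Finset.sum_mul]; ring
    have hBmul : B w * ((G.degree w : ℝ) * |y w|) =
        ((G.degree w : ℝ)^2 + ∑ v ∈ G.neighborFinset w, (G.degree v : ℝ)) * |y w| := by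
      rw [hBdef]
      field_simp
    have hlB : |lam| ≤ B w :=
      le_of_mul_le_mul_right (habs.trans_eq hBmul.symm) (mul_pos hdpos hyw)
    exact le_trans (le_trans (le_abs_self lam) hlB) (humax w hwS)
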